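/- Let R > 0 and let μ, μ̃ be Borel probability measures on ℝ^d supported in the closed ball B̄(R). Suppose π is a coupling of μ and μ̃ and C ≥ 0 is such that ‖x − y‖ ≤ C for π-almost every (x, y). Then for every z ∈ ℝ^d one has ‖γ(z, μ) − γ(z, μ̃)‖ ≤ (1 + 2R‖z‖) · C. In other words, γ(z, ·) is Lipschitz with the non-exponential constant (1 + 2R‖z‖) with respect to the ∞-Wasserstein distance on probability measures supported in B̄(R). -/

import Mathlib

/-! Write `f y = exp ⟪z, y⟫`, `A = ∫ f dμ` and `B = ∫ f dμ'`, so that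
`γ(z, μ) - γ(z, μ') = (A B)⁻¹ • (B • ∫ f y • y dμ - A • ∫ f y • y dμ')`.
Integrating over two independent copies `(x, y)`, `(x', y')` of the coupling and symmetrising
in the two copies, twice the bracket is the integral of `a • (x - y') + b • (x' - y)` with
`a = f x f y'` and `b = f y f x'`. This equals `a • (x - y) + b • (x' - y') + (a - b) • (y - y')`:
the first two terms have norm at most `C (a + b)`, and since the logarithmic mean of `a` and `b`
is at most their arithmetic mean, `|a - b| ≤ ‖z‖ C (a + b)`, while `‖y - y'‖ ≤ 2 R`.
Finally, `a + b` integrates to `2 A B`. -/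

open MeasureTheory
open scoped RealInnerProductSpace

/-- The normalisation constant `γ₂(z, μ) = ∫ exp⟨z,y⟩ dμ(y)`. -/
noncomputable def gamma2 {d : ℕ} (z : EuclideanSpace ℝ (Fin d))
    (μ : Measure (EuclideanSpace ℝ (Fin d))) : ℝ :=
  ∫ y, Real.exp ⟪z, y⟫ ∂μ

/-- The attention map `γ(z, μ) = (∫ exp⟨z,y⟩ • y dμ(y)) / γ₂(z, μ)`. -/
noncomputable def gammaAttn {d : ℕ} (z : EuclideanSpace ℝ (Fin d))
    (μ : Measure (EuclideanSpace ℝ (Fin d))) : EuclideanSpace ℝ (Fin d) :=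
  (gamma2 z μ)⁻¹ • ∫ y, Real.exp ⟪z, y⟫ • y ∂μ

section
open Real

lemma exp_sub_one_le_mul_exp_add_one {u : ℝ} (hu : 0 ≤ u) :
    exp u - 1 ≤ u * (exp u + 1) / 2 := by
  -- With `t = tanh (u / 2)` this is `2 t ≤ log (1 + t) - log (1 - t)`, the first term of the
  -- power series of the right-hand side.
  have hpos : 0 < exp u + 1 := by positivity
  obtain ⟨t, ht⟩ : ∃ t, t = (exp u - 1) / (exp u + 1) := ⟨_, rfl⟩
  have ht0 : 0 ≤ t := ht ▸ div_nonneg (by linarith [one_le_exp hu]) hpos.le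
  have ht1 : t < 1 := by rw [ht, div_lt_one hpos]; linarith
  have hlog : log (1 + t) - log (1 - t) = u := by
    rw [← log_div (by linarith) (by linarith), ← log_exp u]
    congr 1
    rw [ht]
    field_simp
    ring
  have h := le_hasSum (hlog ▸ hasSum_log_sub_log_of_abs_lt_one (abs_lt.mpr ⟨by linarith, ht1⟩)) 0
    fun k _ ↦ by positivity
  simp only [CharP.cast_eq_zero, mul_zero, zero_add, div_one, mul_one, pow_one, ht] at h
  rw [mul_div_assoc', div_le_iff₀ hpos] at h
  linarith

lemma abs_exp_sub_exp_le (s t : ℝ) : |exp s - exp t| ≤ |s - t| * (exp s + exp t) / 2 := by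
  wlog hts : t ≤ s generalizing s t
  · simpa only [abs_sub_comm, add_comm] using this t s (le_of_not_ge hts)
  have hu : 0 ≤ s - t := sub_nonneg.mpr hts
  have hs : exp s = exp t * exp (s - t) := by rw [← exp_add, add_sub_cancel]
  rw [abs_of_nonneg hu, abs_of_nonneg (sub_nonneg.mpr (exp_le_exp.mpr hts)), hs]
  have := mul_le_mul_of_nonneg_left (exp_sub_one_le_mul_exp_add_one hu) (exp_pos t).le
  linarith

lemma norm_exp_inner_smul_add_le {E : Type*} [NormedAddCommGroup E] [InnerProductSpace ℝ E]
    {R C : ℝ} {z x y x' y' : E} (hy : ‖y‖ ≤ R) (hy' : ‖y'‖ ≤ R)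
    (hxy : ‖x - y‖ ≤ C) (hxy' : ‖x' - y'‖ ≤ C) :
    ‖(exp ⟪z, x⟫ * exp ⟪z, y'⟫) • (x - y') + (exp ⟪z, y⟫ * exp ⟪z, x'⟫) • (x' - y)‖ ≤
      (1 + 2 * R * ‖z‖) * C * (exp ⟪z, x⟫ * exp ⟪z, y'⟫ + exp ⟪z, y⟫ * exp ⟪z, x'⟫) := by
  set a := exp ⟪z, x⟫ * exp ⟪z, y'⟫ with ha
  set b := exp ⟪z, y⟫ * exp ⟪z, x'⟫ with hb
  have ha0 : 0 ≤ a := by positivity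
  have hb0 : 0 ≤ b := by positivity
  have hexponents : |(⟪z, x⟫ + ⟪z, y'⟫) - (⟪z, y⟫ + ⟪z, x'⟫)| ≤ 2 * (‖z‖ * C) :=
    calc |(⟪z, x⟫ + ⟪z, y'⟫) - (⟪z, y⟫ + ⟪z, x'⟫)| = |⟪z, x - y⟫ - ⟪z, x' - y'⟫| := by
          rw [inner_sub_right, inner_sub_right]; ring_nf
      _ ≤ ‖z‖ * ‖x - y‖ + ‖z‖ * ‖x' - y'‖ :=
          (abs_sub _ _).trans (add_le_add (abs_real_inner_le_norm _ _) (abs_real_inner_le_norm _ _))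
      _ ≤ 2 * (‖z‖ * C) := by nlinarith [norm_nonneg z]
  have hab : |a - b| ≤ ‖z‖ * C * (a + b) :=
    calc |a - b| ≤ |(⟪z, x⟫ + ⟪z, y'⟫) - (⟪z, y⟫ + ⟪z, x'⟫)| * (a + b) / 2 := by
          simpa only [ha, hb, exp_add] using
            abs_exp_sub_exp_le (⟪z, x⟫ + ⟪z, y'⟫) (⟪z, y⟫ + ⟪z, x'⟫)
      _ ≤ 2 * (‖z‖ * C) * (a + b) / 2 := by gcongr
      _ = ‖z‖ * C * (a + b) := by ring
  have hyy' : ‖y - y'‖ ≤ 2 * R := (norm_sub_le _ _).trans (by linarith)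
  calc ‖a • (x - y') + b • (x' - y)‖ = ‖a • (x - y) + b • (x' - y') + (a - b) • (y - y')‖ := by
        congr 1; module
    _ ≤ a * ‖x - y‖ + b * ‖x' - y'‖ + |a - b| * ‖y - y'‖ := by
        refine (norm_add₃_le ..).trans_eq ?_
        rw [norm_smul, norm_smul, norm_smul, Real.norm_of_nonneg ha0, Real.norm_of_nonneg hb0,
          Real.norm_eq_abs]
    _ ≤ a * C + b * C + ‖z‖ * C * (a + b) * (2 * R) := by
        have : 0 ≤ ‖z‖ * C * (a + b) := (abs_nonneg _).trans hab
        gcongr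
    _ = (1 + 2 * R * ‖z‖) * C * (a + b) := by ring

end

lemma Continuous.integrable_of_measure_closedBall_eq_one {X F : Type*} [MetricSpace X]
    [ProperSpace X] [MeasurableSpace X] [BorelSpace X] [NormedAddCommGroup F]
    {ν : Measure X} [IsProbabilityMeasure ν] {x₀ : X} {R : ℝ} (hν : ν (Metric.closedBall x₀ R) = 1)
    {g : X → F} (hg : Continuous g) : Integrable g ν := by
  rw [← Measure.restrict_eq_self_of_ae_mem
    ((mem_ae_iff_prob_eq_one Metric.isClosed_closedBall.measurableSet).mpr hν)]
  exact hg.continuousOn.integrableOn_compact (isCompact_closedBall x₀ R)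

lemma MeasureTheory.MeasurePreserving.integral_comp_of_aestronglyMeasurable {α β F : Type*}
    [MeasurableSpace α] [MeasurableSpace β] [NormedAddCommGroup F] [NormedSpace ℝ F]
    {μ : Measure α} {ν : Measure β} {f : α → β} (hf : MeasurePreserving f μ ν) {g : β → F}
    (hg : AEStronglyMeasurable g ν) : ∫ x, g (f x) ∂μ = ∫ y, g y ∂ν := by
  rw [← hf.map_eq] at hg ⊢
  exact (integral_map hf.measurable.aemeasurable hg).symm

lemma integral_prod_self_symmetrize {E : Type*} [NormedAddCommGroup E] [NormedSpace ℝ E]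
    [MeasurableSpace E] {π : Measure (E × E)} [SFinite π] {f : E → ℝ}
    (hf₁ : Integrable (fun q ↦ f q.1) π) (hf₂ : Integrable (fun q ↦ f q.2) π)
    (hv₁ : Integrable (fun q ↦ f q.1 • q.1) π) (hv₂ : Integrable (fun q ↦ f q.2 • q.2) π) :
    ∫ p, (f p.1.1 * f p.2.2) • (p.1.1 - p.2.2) + (f p.1.2 * f p.2.1) • (p.2.1 - p.1.2) ∂π.prod π =
      (2 : ℝ) • ((∫ q, f q.2 ∂π) • ∫ q, f q.1 • q.1 ∂π -
        (∫ q, f q.1 ∂π) • ∫ q, f q.2 • q.2 ∂π) := by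
  set G : (E × E) × (E × E) → E := fun p ↦ f p.1.2 • (f p.2.1 • p.2.1) - f p.1.1 • (f p.2.2 • p.2.2)
  have hG : Integrable G (π.prod π) := (hf₂.smul_prod hv₁).sub (hf₁.smul_prod hv₂)
  have hsymm : ∀ p : (E × E) × (E × E),
      (f p.1.1 * f p.2.2) • (p.1.1 - p.2.2) + (f p.1.2 * f p.2.1) • (p.2.1 - p.1.2) =
        G p + G p.swap :=
    fun p ↦ by simp only [G, Prod.fst_swap, Prod.snd_swap]; module
  simp_rw [hsymm]
  rw [integral_add hG (hG.swap : Integrable (fun p ↦ G p.swap) _), integral_prod_swap G,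
    ← two_smul ℝ, integral_sub (hf₂.smul_prod hv₁) (hf₁.smul_prod hv₂),
    integral_prod_smul (fun q : E × E ↦ f q.2) fun q : E × E ↦ f q.1 • q.1,
    integral_prod_smul (fun q : E × E ↦ f q.1) fun q : E × E ↦ f q.2 • q.2]

lemma norm_integral_exp_smul_sub_le_of_ae {E : Type*} [NormedAddCommGroup E]
    [InnerProductSpace ℝ E] [MeasurableSpace E] {R C : ℝ} (z : E) {π : Measure (E × E)} [SFinite π]
    (hf₁ : Integrable (fun q : E × E ↦ Real.exp ⟪z, q.1⟫) π)
    (hf₂ : Integrable (fun q : E × E ↦ Real.exp ⟪z, q.2⟫) π)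
    (hv₁ : Integrable (fun q : E × E ↦ Real.exp ⟪z, q.1⟫ • q.1) π)
    (hv₂ : Integrable (fun q : E × E ↦ Real.exp ⟪z, q.2⟫ • q.2) π)
    (hgood : ∀ᵐ q ∂π, ‖q.1 - q.2‖ ≤ C ∧ ‖q.2‖ ≤ R) :
    ‖(∫ q, Real.exp ⟪z, q.2⟫ ∂π) • (∫ q, Real.exp ⟪z, q.1⟫ • q.1 ∂π) -
        (∫ q, Real.exp ⟪z, q.1⟫ ∂π) • ∫ q, Real.exp ⟪z, q.2⟫ • q.2 ∂π‖ ≤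
      (1 + 2 * R * ‖z‖) * C * ((∫ q, Real.exp ⟪z, q.1⟫ ∂π) * ∫ q, Real.exp ⟪z, q.2⟫ ∂π) := by
  set f : E → ℝ := fun y ↦ Real.exp ⟪z, y⟫
  have hmass : ∫ p, f p.1.1 * f p.2.2 + f p.1.2 * f p.2.1 ∂π.prod π =
      2 * ((∫ q, f q.1 ∂π) * ∫ q, f q.2 ∂π) := by
    rw [integral_add (hf₁.mul_prod hf₂) (hf₂.mul_prod hf₁),
      integral_prod_mul (fun q : E × E ↦ f q.1) fun q : E × E ↦ f q.2,
      integral_prod_mul (fun q : E × E ↦ f q.2) fun q : E × E ↦ f q.1]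
    ring
  have hpt : ∀ᵐ p ∂π.prod π,
      ‖(f p.1.1 * f p.2.2) • (p.1.1 - p.2.2) + (f p.1.2 * f p.2.1) • (p.2.1 - p.1.2)‖ ≤
        (1 + 2 * R * ‖z‖) * C * (f p.1.1 * f p.2.2 + f p.1.2 * f p.2.1) := by
    filter_upwards [Measure.quasiMeasurePreserving_fst.ae hgood,
      Measure.quasiMeasurePreserving_snd.ae hgood] with p h₁ h₂
    exact norm_exp_inner_smul_add_le h₁.2 h₂.2 h₁.1 h₂.1
  have hmass_int : Integrable (fun p : (E × E) × (E × E) ↦ f p.1.1 * f p.2.2 + f p.1.2 * f p.2.1)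
      (π.prod π) := (hf₁.mul_prod hf₂).add (hf₂.mul_prod hf₁)
  have hbound := norm_integral_le_of_norm_le (hmass_int.const_mul _) hpt
  rw [integral_prod_self_symmetrize hf₁ hf₂ hv₁ hv₂, integral_const_mul, hmass, norm_smul,
    Real.norm_two] at hbound
  linarith

lemma norm_integral_exp_smul_sub_le_of_coupling {E : Type*} [NormedAddCommGroup E]
    [InnerProductSpace ℝ E] [ProperSpace E] [MeasurableSpace E] [BorelSpace E] {R C : ℝ}
    {μ μ' : Measure E} [IsProbabilityMeasure μ] [IsProbabilityMeasure μ']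
    (hμ : μ (Metric.closedBall 0 R) = 1) (hμ' : μ' (Metric.closedBall 0 R) = 1) (z : E)
    {π : Measure (E × E)} [SFinite π] (hfst : π.fst = μ) (hsnd : π.snd = μ')
    (hae : ∀ᵐ q ∂π, ‖q.1 - q.2‖ ≤ C) :
    ‖(∫ y, Real.exp ⟪z, y⟫ ∂μ') • (∫ y, Real.exp ⟪z, y⟫ • y ∂μ) -
        (∫ y, Real.exp ⟪z, y⟫ ∂μ) • ∫ y, Real.exp ⟪z, y⟫ • y ∂μ'‖ ≤
      (1 + 2 * R * ‖z‖) * C * ((∫ y, Real.exp ⟪z, y⟫ ∂μ) * ∫ y, Real.exp ⟪z, y⟫ ∂μ') := by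
  have hf : Continuous fun y : E ↦ Real.exp ⟪z, y⟫ := by fun_prop
  have hfid : Continuous fun y : E ↦ Real.exp ⟪z, y⟫ • y := by fun_prop
  have hX : MeasurePreserving Prod.fst π μ := ⟨measurable_fst, hfst⟩
  have hY : MeasurePreserving Prod.snd π μ' := ⟨measurable_snd, hsnd⟩
  have hgood : ∀ᵐ q ∂π, ‖q.1 - q.2‖ ≤ C ∧ ‖q.2‖ ≤ R := by
    refine hae.and (hY.quasiMeasurePreserving.ae (p := fun y ↦ ‖y‖ ≤ R) ?_)
    filter_upwards [(mem_ae_iff_prob_eq_one measurableSet_closedBall).mpr hμ'] with y hy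
    exact mem_closedBall_zero_iff.mp hy
  rw [← hX.integral_comp_of_aestronglyMeasurable hf.aestronglyMeasurable,
    ← hY.integral_comp_of_aestronglyMeasurable hf.aestronglyMeasurable,
    ← hX.integral_comp_of_aestronglyMeasurable hfid.aestronglyMeasurable,
    ← hY.integral_comp_of_aestronglyMeasurable hfid.aestronglyMeasurable]
  exact norm_integral_exp_smul_sub_le_of_ae z
    (hX.integrable_comp_of_integrable (hf.integrable_of_measure_closedBall_eq_one hμ))
    (hY.integrable_comp_of_integrable (hf.integrable_of_measure_closedBall_eq_one hμ'))
    (hX.integrable_comp_of_integrable (hfid.integrable_of_measure_closedBall_eq_one hμ))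
    (hY.integrable_comp_of_integrable (hfid.integrable_of_measure_closedBall_eq_one hμ')) hgood

theorem stmt_5 {d : ℕ} (R C : ℝ)
    (μ μ' : Measure (EuclideanSpace ℝ (Fin d)))
    [IsProbabilityMeasure μ] [IsProbabilityMeasure μ']
    (hμ : μ (Metric.closedBall 0 R) = 1) (hμ' : μ' (Metric.closedBall 0 R) = 1)
    (z : EuclideanSpace ℝ (Fin d))
    (π : Measure (EuclideanSpace ℝ (Fin d) × EuclideanSpace ℝ (Fin d)))
    [IsProbabilityMeasure π] (hfst : π.fst = μ) (hsnd : π.snd = μ')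
    (hae : ∀ᵐ q ∂π, ‖q.1 - q.2‖ ≤ C) :
    ‖gammaAttn z μ - gammaAttn z μ'‖ ≤ (1 + 2 * R * ‖z‖) * C := by
  have hexp : Continuous fun y : EuclideanSpace ℝ (Fin d) ↦ Real.exp ⟪z, y⟫ := by fun_prop
  have hA : 0 < gamma2 z μ := integral_exp_pos (hexp.integrable_of_measure_closedBall_eq_one hμ)
  have hB : 0 < gamma2 z μ' := integral_exp_pos (hexp.integrable_of_measure_closedBall_eq_one hμ')
  have hdiff : gammaAttn z μ - gammaAttn z μ' = (gamma2 z μ * gamma2 z μ')⁻¹ •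
      (gamma2 z μ' • ∫ y, Real.exp ⟪z, y⟫ • y ∂μ - gamma2 z μ • ∫ y, Real.exp ⟪z, y⟫ • y ∂μ') := by
    rw [gammaAttn, gammaAttn, smul_sub, smul_smul, smul_smul]
    congr 2 <;> field_simp
  rw [hdiff, norm_smul, Real.norm_of_nonneg (by positivity), inv_mul_le_iff₀ (by positivity)]
  exact (norm_integral_exp_smul_sub_le_of_coupling hμ hμ' z hfst hsnd hae).trans_eq
    (by unfold gamma2; ring)
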